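/- Uniqueness for the degenerate periodic problem with a coercivity window (Theorem 2.6): let ε > 0, i ∈ {0,1}, G_thr > 0, and 0 ≤ θ_α < θ_ω ≤ 1, let C_F be a Friedrichs constant for Ω, let A : ℝ×ℝ² → ℝ and C : ℝ×ℝ² → ℝ² be C¹ on an open set containing ℝ×closure(Ω) and 1-periodic in θ, with A ≥ 0 everywhere and A(θ,x) ≥ G_thr whenever θ ∈ [θ_α,θ_ω], and let g : ℝ² → ℝ be continuous. If S₁ and S₂ are both C¹ in θ, C² in x on an open set containing ℝ×closure(Ω), 1-periodic in θ, and satisfy ∂S/∂θ − (1/εⁱ)∇·(A(θ,·)∇S(θ,·)) = (1/εⁱ)∇·C(θ,·) pointwise in Ω and ∂S/∂n + S = g pointwise on ∂Ω for every θ, then S₁ = S₂ on ℝ×closure(Ω). -/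

import Mathlib

/-!
The difference `w = S₁ - S₂` solves the homogeneous problem `∂_θ w = ε⁻ⁱ ∇·(A ∇w)` in `Ω`,
`∂_n w + w = 0` on `∂Ω`. Testing the equation with `w` and applying the divergence theorem, the
energy `E(θ) = ∫_Ω w²` satisfies `E' = -2ε⁻ⁱ (∫_Ω A |∇w|² + ∫_∂Ω A w²) ≤ 0`. A nonincreasing
`1`-periodic function is constant, so this dissipation vanishes for every `θ`. At `θ = θα`, where
`A ≥ Gthr > 0`, this forces `∫_Ω |∇w|² = ∫_∂Ω w² = 0`, and the Friedrichs inequality gives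
`E(θα) = 0`. Hence `E ≡ 0`, so `w` vanishes on `Ω` and, by continuity, on its closure.
-/

open MeasureTheory Set Real
open scoped RealInnerProductSpace

noncomputable section

abbrev E2 : Type := EuclideanSpace ℝ (Fin 2)

/-- Divergence of a vector field on the plane. -/
def vdiv (F : E2 → E2) (x : E2) : ℝ := ∑ i, fderiv ℝ F x (EuclideanSpace.single i 1) i

/-- A nonempty bounded open set in the plane with `C¹` boundary described by a defining
function `Φ`. -/
structure C1Domain where
  Ω : Set E2
  Φ : E2 → ℝ
  nonempty : Ω.Nonempty
  bounded : Bornology.IsBounded Ω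
  isOpen : IsOpen Ω
  smoothΦ : ContDiff ℝ 1 Φ
  eq_dom : Ω = {x | Φ x < 0}
  eq_bd : frontier Ω = {x | Φ x = 0}
  grad_ne : ∀ x ∈ frontier Ω, gradient Φ x ≠ 0

/-- Outward unit normal. -/
def nml (D : C1Domain) (x : E2) : E2 := ‖gradient D.Φ x‖⁻¹ • gradient D.Φ x

/-- The divergence theorem holds on the domain. -/
def DivergenceThm (D : C1Domain) : Prop :=
  ∀ F : E2 → E2, (∃ U : Set E2, IsOpen U ∧ closure D.Ω ⊆ U ∧ ContDiffOn ℝ 1 F U) →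
    (∫ x in D.Ω, vdiv F x) = ∫ x in frontier D.Ω, ⟪F x, nml D x⟫ ∂μH[1]

/-- `CF` is a Friedrichs constant for the domain. -/
def IsFriedrichs (D : C1Domain) (CF : ℝ) : Prop :=
  0 < CF ∧ ∀ u : E2 → ℝ, (∃ U : Set E2, IsOpen U ∧ closure D.Ω ⊆ U ∧ ContDiffOn ℝ 1 u U) →
    (∫ x in D.Ω, (u x) ^ 2) ≤
      CF * ((∫ x in D.Ω, ‖gradient u x‖ ^ 2) + ∫ x in frontier D.Ω, (u x) ^ 2 ∂μH[1])

/-- `S(θ,x)` is `C¹` in `θ` and `C²` in `x` on an open set containing `ℝ × closure Ω`,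
and is `1`-periodic in `θ`. -/
def PeriodicReg (D : C1Domain) (S : ℝ → E2 → ℝ) : Prop :=
  (∃ U : Set (ℝ × E2), IsOpen U ∧ ((univ : Set ℝ) ×ˢ closure D.Ω) ⊆ U ∧
    ContDiffOn ℝ 1 (fun p : ℝ × E2 => S p.1 p.2) U ∧
    ∀ θ : ℝ, ContDiffOn ℝ 2 (fun x => S θ x) {x | (θ, x) ∈ U}) ∧
  ∀ θ x, S (θ + 1) x = S θ x

open Topology

theorem Antitone.eq_of_periodic {β : Type*} [PartialOrder β] {f : ℝ → β} {T : ℝ}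
    (hf : Antitone f) (hp : Function.Periodic f T) (hT : 0 < T) (a b : ℝ) : f a = f b := by
  wlog hab : a ≤ b generalizing a b
  · exact (this b a (le_of_not_ge hab)).symm
  obtain ⟨n, hn⟩ := exists_nat_ge ((b - a) / T)
  refine le_antisymm ?_ (hf hab)
  calc f a = f (a + n * T) := (hp.nat_mul n a).symm
    _ ≤ f b := hf (by rw [div_le_iff₀ hT] at hn; linarith)

theorem exists_isOpen_contDiffOn_of_forall_contDiffAt {E F : Type*} [NormedAddCommGroup E]
    [NormedSpace ℝ E] [NormedAddCommGroup F] [NormedSpace ℝ F] {f : E → F} {s : Set E} {n : ℕ}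
    (h : ∀ x ∈ s, ContDiffAt ℝ n f x) : ∃ U, IsOpen U ∧ s ⊆ U ∧ ContDiffOn ℝ n f U :=
  ⟨{x | ContDiffAt ℝ n f x},
    isOpen_iff_mem_nhds.2 fun _ (hx : ContDiffAt ℝ n f _) => hx.eventually (by simp), h,
    fun _ (hx : ContDiffAt ℝ n f _) => hx.contDiffWithinAt⟩

section ParametricIntegral

variable {E : Type*} [NormedAddCommGroup E] [NormedSpace ℝ E] {F : ℝ → E → ℝ} {t : ℝ} {x : E}

theorem hasDerivAt_fst_of_contDiffAt
    (hF : ContDiffAt ℝ 1 (fun p : ℝ × E => F p.1 p.2) (t, x)) :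
    HasDerivAt (fun s => F s x) (fderiv ℝ (fun p : ℝ × E => F p.1 p.2) (t, x) (1, 0)) t := by
  have hpair : HasDerivAt (fun s : ℝ => (s, x)) ((1 : ℝ), (0 : E)) t :=
    (hasDerivAt_id t).prodMk (hasDerivAt_const t x)
  exact (hF.differentiableAt one_ne_zero).hasFDerivAt.comp_hasDerivAt t hpair

theorem continuousAt_deriv_fst_of_contDiffAt
    (hF : ContDiffAt ℝ 1 (fun p : ℝ × E => F p.1 p.2) (t, x)) :
    ContinuousAt (fun p : ℝ × E => deriv (fun s => F s p.2) p.1) (t, x) := by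
  have hfderiv : ContinuousAt (fun p => fderiv ℝ (fun p : ℝ × E => F p.1 p.2) p (1, 0)) (t, x) :=
    (hF.fderiv_right (m := 0) le_rfl).continuousAt.clm_apply continuousAt_const
  refine hfderiv.congr ?_
  filter_upwards [hF.eventually (by simp)] with p hp
  exact (hasDerivAt_fst_of_contDiffAt hp).deriv.symm

theorem contDiffAt_of_contDiffAt_uncurry {n : WithTop ℕ∞}
    (hF : ContDiffAt ℝ n (fun p : ℝ × E => F p.1 p.2) (t, x)) : ContDiffAt ℝ n (F t) x :=
  hF.comp x (contDiffAt_const.prodMk contDiffAt_id)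

variable [MeasurableSpace E] [OpensMeasurableSpace E] {μ : Measure E} [IsFiniteMeasureOnCompacts μ]

theorem hasDerivAt_setIntegral_of_contDiffAt {K s : Set E} (hK : IsCompact K)
    (hs : MeasurableSet s) (hsK : s ⊆ K)
    (hF : ∀ t, ∀ x ∈ K, ContDiffAt ℝ 1 (fun p : ℝ × E => F p.1 p.2) (t, x)) (t₀ : ℝ) :
    HasDerivAt (fun t => ∫ x in s, F t x ∂μ) (∫ x in s, deriv (fun t => F t x) t₀ ∂μ) t₀ := by
  have hF_cont : ∀ t, ContinuousOn (F t) K := fun t x hx =>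
    (contDiffAt_of_contDiffAt_uncurry (hF t x hx)).continuousAt.continuousWithinAt
  have hF'_cont : ContinuousOn (fun p : ℝ × E => deriv (fun s => F s p.2) p.1)
      (Icc (t₀ - 1) (t₀ + 1) ×ˢ K) := fun p hp =>
    (continuousAt_deriv_fst_of_contDiffAt (hF p.1 p.2 hp.2)).continuousWithinAt
  obtain ⟨M, hM⟩ := (isCompact_Icc.prod hK).exists_bound_of_continuousOn hF'_cont
  have hball : Metric.ball t₀ 1 ⊆ Icc (t₀ - 1) (t₀ + 1) := by
    rw [← Real.closedBall_eq_Icc]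
    exact Metric.ball_subset_closedBall
  refine (hasDerivAt_integral_of_dominated_loc_of_deriv_le
    (F' := fun t x => deriv (fun s => F s x) t) (bound := fun _ => M)
    (Metric.ball_mem_nhds t₀ one_pos)
    (.of_forall fun t => ((hF_cont t).mono hsK).aestronglyMeasurable hs)
    (((hF_cont t₀).integrableOn_compact (μ := μ) hK).mono_set hsK) ?_ ?_ ?_ ?_).2
  · have hF'_t₀ : ContinuousOn (fun x => deriv (fun s => F s x) t₀) K :=
      hF'_cont.comp (Continuous.prodMk_right t₀).continuousOn
        fun _ hy => ⟨hball (Metric.mem_ball_self one_pos), hy⟩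
    exact (hF'_t₀.mono hsK).aestronglyMeasurable hs
  · exact ae_restrict_of_forall_mem hs fun x hx t ht => hM (t, x) ⟨hball ht, hsK hx⟩
  · exact integrableOn_const (μ := μ) ((measure_mono hsK).trans_lt hK.measure_lt_top).ne
  · exact ae_restrict_of_forall_mem hs fun x hx t _ =>
      (hasDerivAt_fst_of_contDiffAt (hF t x (hsK hx))).differentiableAt.hasDerivAt

end ParametricIntegral

theorem integral_eq_zero_of_integral_mul_eq_zero {α : Type*} [MeasurableSpace α]
    {μ : Measure α} {a f : α → ℝ} {M : ℝ} (ha : ∀ᵐ x ∂μ, 0 < a x)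
    (ha_meas : AEStronglyMeasurable a μ) (ha_bdd : ∀ᵐ x ∂μ, ‖a x‖ ≤ M) (hf : 0 ≤ᵐ[μ] f)
    (h : ∫ x, a x * f x ∂μ = 0) : ∫ x, f x ∂μ = 0 := by
  by_cases hfi : Integrable f μ
  · have haf_nonneg : 0 ≤ᵐ[μ] fun x => a x * f x := by
      filter_upwards [ha, hf] with x hax hfx
      exact mul_nonneg hax.le hfx
    have haf : (fun x => a x * f x) =ᵐ[μ] 0 :=
      (integral_eq_zero_iff_of_nonneg_ae haf_nonneg (hfi.bdd_mul ha_meas ha_bdd)).1 h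
    refine integral_eq_zero_of_ae ?_
    filter_upwards [ha, haf] with x hax hafx
    exact (mul_eq_zero.1 hafx).resolve_left hax.ne'
  · exact integral_undef hfi

theorem IsOpen.eqOn_closure_zero_of_setIntegral_sq_eq_zero {X : Type*} [TopologicalSpace X]
    [MeasurableSpace X] [OpensMeasurableSpace X] {μ : Measure X} [μ.IsOpenPosMeasure]
    {U : Set X} (hU : IsOpen U) {f : X → ℝ} (hf : ContinuousOn f (closure U))
    (hfi : IntegrableOn (fun x => f x ^ 2) U μ) (h : ∫ x in U, f x ^ 2 ∂μ = 0) :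
    EqOn f 0 (closure U) := by
  have hsq : (fun x => f x ^ 2) =ᵐ[μ.restrict U] 0 :=
    (integral_eq_zero_iff_of_nonneg (fun x => sq_nonneg (f x)) hfi).1 h
  have hU_eq : EqOn f 0 U :=
    Measure.eqOn_open_of_ae_eq (hsq.mono fun x hx => pow_eq_zero_iff two_ne_zero |>.1 hx) hU
      (hf.mono subset_closure) continuousOn_const
  exact hU_eq.of_subset_closure hf continuousOn_const subset_closure subset_rfl

section Gradient

variable {F : Type*} [NormedAddCommGroup F] [InnerProductSpace ℝ F] [CompleteSpace F]
  {u v : F → ℝ} {x : F}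

theorem ContDiffAt.gradient {n : WithTop ℕ∞} (hu : ContDiffAt ℝ (n + 1) u x) :
    ContDiffAt ℝ n (gradient u) x :=
  (InnerProductSpace.toDual ℝ F).symm.contDiff.contDiffAt.comp x (hu.fderiv_right le_rfl)

theorem gradient_sub (hu : DifferentiableAt ℝ u x) (hv : DifferentiableAt ℝ v x) :
    gradient (fun y => u y - v y) x = gradient u x - gradient v x := by
  simp only [gradient, fderiv_fun_sub hu hv, map_sub]

end Gradient

theorem gradient_apply_single (u : E2 → ℝ) (x : E2) (i : Fin 2) :
    gradient u x i = fderiv ℝ u x (EuclideanSpace.single i 1) := by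
  have h := inner_gradient_left (𝕜 := ℝ) (f := u) (x := x) (y := EuclideanSpace.single i 1)
  rwa [EuclideanSpace.inner_single_right, one_mul, conj_trivial] at h

theorem ContDiffAt.continuousAt_vdiv {F : E2 → E2} {x : E2} (hF : ContDiffAt ℝ 1 F x) :
    ContinuousAt (vdiv F) x := by
  have hfderiv := (hF.fderiv_right (m := 0) le_rfl).continuousAt
  unfold vdiv
  fun_prop

theorem Filter.EventuallyEq.vdiv_eq {F G : E2 → E2} {x : E2} (h : F =ᶠ[𝓝 x] G) :
    vdiv F x = vdiv G x := by
  simp only [vdiv, h.fderiv_eq]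

theorem vdiv_sub {F G : E2 → E2} {x : E2} (hF : DifferentiableAt ℝ F x)
    (hG : DifferentiableAt ℝ G x) :
    vdiv (fun y => F y - G y) x = vdiv F x - vdiv G x := by
  simp only [vdiv, fderiv_fun_sub hF hG, ← Finset.sum_sub_distrib]
  rfl

theorem vdiv_smul {u : E2 → ℝ} {G : E2 → E2} {x : E2} (hu : DifferentiableAt ℝ u x)
    (hG : DifferentiableAt ℝ G x) :
    vdiv (fun y => u y • G y) x = ⟪gradient u x, G x⟫ + u x * vdiv G x := by
  have hinner : ⟪gradient u x, G x⟫ = ∑ i, fderiv ℝ u x (EuclideanSpace.single i 1) * G x i := by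
    simp only [PiLp.inner_apply, RCLike.inner_apply, conj_trivial, gradient_apply_single,
      mul_comm]
  rw [hinner, vdiv, vdiv, fderiv_fun_smul hu hG, Finset.mul_sum, ← Finset.sum_add_distrib]
  refine Finset.sum_congr rfl fun i _ => ?_
  simp only [add_apply, smul_apply, ContinuousLinearMap.smulRight_apply, PiLp.add_apply,
    PiLp.smul_apply, smul_eq_mul]
  ring

theorem vdiv_smul_gradient_sub {a u v : E2 → ℝ} {x : E2} (ha : ContDiffAt ℝ 1 a x)
    (hu : ContDiffAt ℝ 2 u x) (hv : ContDiffAt ℝ 2 v x) :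
    vdiv (fun y => a y • gradient (fun z => u z - v z) y) x =
      vdiv (fun y => a y • gradient u y) x - vdiv (fun y => a y • gradient v y) x := by
  have hev : (fun y => a y • gradient (fun z => u z - v z) y) =ᶠ[𝓝 x]
      fun y => a y • gradient u y - a y • gradient v y := by
    filter_upwards [hu.eventually (by simp), hv.eventually (by simp)] with y hu' hv'
    rw [gradient_sub (hu'.differentiableAt two_ne_zero) (hv'.differentiableAt two_ne_zero),
      smul_sub]
  rw [hev.vdiv_eq, vdiv_sub (F := fun y => a y • gradient u y)
    (G := fun y => a y • gradient v y)
    ((ha.smul (hu.gradient (n := 1))).differentiableAt one_ne_zero)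
    ((ha.smul (hv.gradient (n := 1))).differentiableAt one_ne_zero)]

namespace C1Domain

variable (D : C1Domain)

theorem isCompact_closure : IsCompact (closure D.Ω) := D.bounded.isCompact_closure

theorem integrableOn_of_continuousAt {f : E2 → ℝ} (hf : ∀ x ∈ closure D.Ω, ContinuousAt f x) :
    IntegrableOn f D.Ω :=
  ((continuousOn_of_forall_continuousAt hf).integrableOn_compact D.isCompact_closure).mono_set
    subset_closure

end C1Domain

namespace DivergenceThm

variable {D : C1Domain} (hdiv : DivergenceThm D)
include hdiv

theorem setIntegral_mul_vdiv {u : E2 → ℝ} {F : E2 → E2}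
    (hu : ∀ x ∈ closure D.Ω, ContDiffAt ℝ 1 u x) (hF : ∀ x ∈ closure D.Ω, ContDiffAt ℝ 1 F x) :
    ∫ x in D.Ω, u x * vdiv F x =
      (∫ x in frontier D.Ω, u x * ⟪F x, nml D x⟫ ∂μH[1]) - ∫ x in D.Ω, ⟪gradient u x, F x⟫ := by
  have hgreen := hdiv (fun y => u y • F y)
    (exists_isOpen_contDiffOn_of_forall_contDiffAt fun x hx => (hu x hx).smul (hF x hx))
  have hprod : ∀ x ∈ D.Ω,
      vdiv (fun y => u y • F y) x = ⟪gradient u x, F x⟫ + u x * vdiv F x := fun x hx =>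
    vdiv_smul ((hu x (subset_closure hx)).differentiableAt one_ne_zero)
      ((hF x (subset_closure hx)).differentiableAt one_ne_zero)
  have hint_grad : IntegrableOn (fun x => ⟪gradient u x, F x⟫) D.Ω :=
    D.integrableOn_of_continuousAt fun x hx =>
      ((hu x hx).gradient (n := 0)).continuousAt.inner (hF x hx).continuousAt
  have hint_div : IntegrableOn (fun x => u x * vdiv F x) D.Ω :=
    D.integrableOn_of_continuousAt fun x hx =>
      (hu x hx).continuousAt.mul (hF x hx).continuousAt_vdiv
  rw [setIntegral_congr_fun D.isOpen.measurableSet hprod, integral_add hint_grad hint_div]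
    at hgreen
  simp only [real_inner_smul_left] at hgreen
  linarith

theorem setIntegral_mul_vdiv_smul_gradient {a u : E2 → ℝ}
    (ha : ∀ x ∈ closure D.Ω, ContDiffAt ℝ 1 a x) (hu : ∀ x ∈ closure D.Ω, ContDiffAt ℝ 2 u x)
    (hbc : ∀ x ∈ frontier D.Ω, ⟪gradient u x, nml D x⟫ + u x = 0) :
    ∫ x in D.Ω, u x * vdiv (fun y => a y • gradient u y) x =
      -((∫ x in D.Ω, a x * ‖gradient u x‖ ^ 2) + ∫ x in frontier D.Ω, a x * u x ^ 2 ∂μH[1]) := by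
  rw [hdiv.setIntegral_mul_vdiv (F := fun y => a y • gradient u y)
    (fun x hx => (hu x hx).of_le one_le_two)
    fun x hx => (ha x hx).smul ((hu x hx).gradient (n := 1))]
  have hbd : ∀ x ∈ frontier D.Ω,
      u x * ⟪a x • gradient u x, nml D x⟫ = -(a x * u x ^ 2) := fun x hx => by
    rw [real_inner_smul_left, eq_neg_of_add_eq_zero_left (hbc x hx)]
    ring
  have hin : ∀ x ∈ D.Ω, ⟪gradient u x, a x • gradient u x⟫ = a x * ‖gradient u x‖ ^ 2 :=
    fun x _ => by rw [real_inner_smul_right, real_inner_self_eq_norm_sq]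
  rw [setIntegral_congr_fun isClosed_frontier.measurableSet hbd,
    setIntegral_congr_fun D.isOpen.measurableSet hin, integral_neg]
  ring

end DivergenceThm

namespace PeriodicReg

variable {D : C1Domain} {S S₁ S₂ : ℝ → E2 → ℝ}

theorem contDiffAt_uncurry (h : PeriodicReg D S) (θ : ℝ) {x : E2} (hx : x ∈ closure D.Ω) :
    ContDiffAt ℝ 1 (fun p : ℝ × E2 => S p.1 p.2) (θ, x) :=
  have ⟨⟨_, hU, hΩU, hS, _⟩, _⟩ := h
  hS.contDiffAt (hU.mem_nhds (hΩU ⟨mem_univ θ, hx⟩))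

theorem differentiableAt_fst (h : PeriodicReg D S) (θ : ℝ) {x : E2} (hx : x ∈ closure D.Ω) :
    DifferentiableAt ℝ (fun s => S s x) θ :=
  (hasDerivAt_fst_of_contDiffAt (h.contDiffAt_uncurry θ hx)).differentiableAt

theorem contDiffAt (h : PeriodicReg D S) (θ : ℝ) {x : E2} (hx : x ∈ closure D.Ω) :
    ContDiffAt ℝ 2 (S θ) x :=
  have ⟨⟨_, hU, hΩU, _, hS⟩, _⟩ := h
  (hS θ).contDiffAt ((hU.preimage (Continuous.prodMk_right θ)).mem_nhds (hΩU ⟨mem_univ θ, hx⟩))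

theorem sub (h₁ : PeriodicReg D S₁) (h₂ : PeriodicReg D S₂) :
    PeriodicReg D fun θ x => S₁ θ x - S₂ θ x := by
  obtain ⟨⟨U₁, hU₁, hΩU₁, hS₁, hS₁θ⟩, hper₁⟩ := h₁
  obtain ⟨⟨U₂, hU₂, hΩU₂, hS₂, hS₂θ⟩, hper₂⟩ := h₂
  refine ⟨⟨U₁ ∩ U₂, hU₁.inter hU₂, subset_inter hΩU₁ hΩU₂,
    (hS₁.mono inter_subset_left).sub (hS₂.mono inter_subset_right), fun θ => ?_⟩,
    fun θ x => by simp only [hper₁, hper₂]⟩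
  exact ((hS₁θ θ).mono fun x hx => hx.1).sub ((hS₂θ θ).mono fun x hx => hx.2)

end PeriodicReg

namespace C1Domain

variable (D : C1Domain)

def energy (w : ℝ → E2 → ℝ) (θ : ℝ) : ℝ := ∫ x in D.Ω, w θ x ^ 2

def dissipation (A w : ℝ → E2 → ℝ) (θ : ℝ) : ℝ :=
  (∫ x in D.Ω, A θ x * ‖gradient (w θ) x‖ ^ 2) + ∫ x in frontier D.Ω, A θ x * w θ x ^ 2 ∂μH[1]

variable {D}

theorem dissipation_nonneg {A : ℝ → E2 → ℝ} {θ : ℝ} (hA : ∀ x ∈ closure D.Ω, 0 ≤ A θ x)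
    (w : ℝ → E2 → ℝ) : 0 ≤ D.dissipation A w θ :=
  add_nonneg
    (setIntegral_nonneg D.isOpen.measurableSet fun x hx =>
      mul_nonneg (hA x (subset_closure hx)) (sq_nonneg _))
    (setIntegral_nonneg isClosed_frontier.measurableSet fun x hx =>
      mul_nonneg (hA x (frontier_subset_closure hx)) (sq_nonneg _))

theorem energy_periodic {w : ℝ → E2 → ℝ} (hw : PeriodicReg D w) :
    Function.Periodic (D.energy w) 1 := fun θ => by
  simp only [energy, hw.2]

end C1Domain

theorem IsFriedrichs.setIntegral_sq_eq_zero {D : C1Domain} {CF : ℝ} (hCF : IsFriedrichs D CF)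
    {a u : E2 → ℝ} (ha : ContinuousOn a (closure D.Ω)) (ha_pos : ∀ x ∈ closure D.Ω, 0 < a x)
    (hu : ∀ x ∈ closure D.Ω, ContDiffAt ℝ 1 u x)
    (h : (∫ x in D.Ω, a x * ‖gradient u x‖ ^ 2) + ∫ x in frontier D.Ω, a x * u x ^ 2 ∂μH[1] = 0) :
    ∫ x in D.Ω, u x ^ 2 = 0 := by
  have hΩ := D.isOpen.measurableSet
  have hΓ := (isClosed_frontier (s := D.Ω)).measurableSet
  obtain ⟨M, hM⟩ := D.isCompact_closure.exists_bound_of_continuousOn ha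
  have hgrad_nonneg : 0 ≤ ∫ x in D.Ω, a x * ‖gradient u x‖ ^ 2 := setIntegral_nonneg hΩ
    fun x hx => mul_nonneg (ha_pos x (subset_closure hx)).le (sq_nonneg _)
  have hbd_nonneg : 0 ≤ ∫ x in frontier D.Ω, a x * u x ^ 2 ∂μH[1] := setIntegral_nonneg hΓ
    fun x hx => mul_nonneg (ha_pos x (frontier_subset_closure hx)).le (sq_nonneg _)
  have hgrad : ∫ x in D.Ω, ‖gradient u x‖ ^ 2 = 0 :=
    integral_eq_zero_of_integral_mul_eq_zero
      (ae_restrict_of_forall_mem hΩ fun x hx => ha_pos x (subset_closure hx))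
      ((ha.mono subset_closure).aestronglyMeasurable hΩ)
      (ae_restrict_of_forall_mem hΩ fun x hx => hM x (subset_closure hx))
      (.of_forall fun _ => sq_nonneg _) (by linarith)
  have hbd : ∫ x in frontier D.Ω, u x ^ 2 ∂μH[1] = 0 :=
    integral_eq_zero_of_integral_mul_eq_zero
      (ae_restrict_of_forall_mem hΓ fun x hx => ha_pos x (frontier_subset_closure hx))
      ((ha.mono frontier_subset_closure).aestronglyMeasurable hΓ)
      (ae_restrict_of_forall_mem hΓ fun x hx => hM x (frontier_subset_closure hx))
      (.of_forall fun _ => sq_nonneg _) (by linarith)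
  have hfried := hCF.2 u (exists_isOpen_contDiffOn_of_forall_contDiffAt hu)
  rw [hgrad, hbd, add_zero, mul_zero] at hfried
  exact le_antisymm hfried (setIntegral_nonneg hΩ fun x _ => sq_nonneg _)

section RobinProblem

variable {D : C1Domain} {c : ℝ} {A w : ℝ → E2 → ℝ}

theorem DivergenceThm.hasDerivAt_energy (hdiv : DivergenceThm D)
    (hA : ∀ θ, ∀ x ∈ closure D.Ω, ContDiffAt ℝ 1 (A θ) x) (hw : PeriodicReg D w)
    (hpde : ∀ θ, ∀ x ∈ D.Ω,
      deriv (fun s => w s x) θ = c * vdiv (fun y => A θ y • gradient (w θ) y) x)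
    (hbc : ∀ θ, ∀ x ∈ frontier D.Ω, ⟪gradient (w θ) x, nml D x⟫ + w θ x = 0) (θ : ℝ) :
    HasDerivAt (D.energy w) (-(2 * c) * D.dissipation A w θ) θ := by
  have hderiv : ∀ x ∈ D.Ω, deriv (fun t => w t x ^ 2) θ =
      2 * c * (w θ x * vdiv (fun y => A θ y • gradient (w θ) y) x) := fun x hx => by
    rw [((hw.differentiableAt_fst θ (subset_closure hx)).hasDerivAt.fun_pow 2).deriv, hpde θ x hx]
    ring
  refine (hasDerivAt_setIntegral_of_contDiffAt (μ := volume) (F := fun t x => w t x ^ 2)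
    D.isCompact_closure D.isOpen.measurableSet subset_closure
    (fun t x hx => (hw.contDiffAt_uncurry t hx).pow 2) θ).congr_deriv ?_
  rw [setIntegral_congr_fun D.isOpen.measurableSet hderiv, integral_const_mul,
    hdiv.setIntegral_mul_vdiv_smul_gradient (hA θ) (fun _ => hw.contDiffAt θ) (hbc θ),
    C1Domain.dissipation]
  ring

theorem eq_zero_of_periodic_robin (hdiv : DivergenceThm D) {CF : ℝ} (hCF : IsFriedrichs D CF)
    (hc : 0 < c) (hA : ∀ θ, ∀ x ∈ closure D.Ω, ContDiffAt ℝ 1 (A θ) x)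
    (hA_nonneg : ∀ θ, ∀ x ∈ closure D.Ω, 0 ≤ A θ x) {θ₀ : ℝ}
    (hA_pos : ∀ x ∈ closure D.Ω, 0 < A θ₀ x) (hw : PeriodicReg D w)
    (hpde : ∀ θ, ∀ x ∈ D.Ω,
      deriv (fun s => w s x) θ = c * vdiv (fun y => A θ y • gradient (w θ) y) x)
    (hbc : ∀ θ, ∀ x ∈ frontier D.Ω, ⟪gradient (w θ) x, nml D x⟫ + w θ x = 0) (θ : ℝ) :
    ∀ x ∈ closure D.Ω, w θ x = 0 := by
  have hE' := hdiv.hasDerivAt_energy hA hw hpde hbc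
  have hE_anti : Antitone (D.energy w) := antitone_of_deriv_nonpos
    (fun θ => (hE' θ).differentiableAt) fun θ => by
      rw [(hE' θ).deriv]
      nlinarith [C1Domain.dissipation_nonneg (hA_nonneg θ) w]
  have hE_const := hE_anti.eq_of_periodic (C1Domain.energy_periodic hw) one_pos
  have hdis : D.dissipation A w θ₀ = 0 := by
    have hE'₀ : HasDerivAt (D.energy w) 0 θ₀ :=
      (hasDerivAt_const θ₀ (D.energy w θ₀)).congr_of_eventuallyEq
        (.of_forall fun t => hE_const t θ₀)
    exact (mul_eq_zero.1 ((hE' θ₀).unique hE'₀)).resolve_left (neg_ne_zero.2 (by positivity))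
  have hE₀ : D.energy w θ₀ = 0 := hCF.setIntegral_sq_eq_zero
    (continuousOn_of_forall_continuousAt fun x hx => (hA θ₀ x hx).continuousAt) hA_pos
    (fun x hx => (hw.contDiffAt θ₀ hx).of_le one_le_two) hdis
  exact D.isOpen.eqOn_closure_zero_of_setIntegral_sq_eq_zero
    (continuousOn_of_forall_continuousAt fun x hx => (hw.contDiffAt θ hx).continuousAt)
    (D.integrableOn_of_continuousAt fun x hx => ((hw.contDiffAt θ hx).continuousAt).pow 2)
    ((hE_const θ θ₀).trans hE₀)

end RobinProblem

theorem stmt10_general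
    (D : C1Domain) (hdiv : DivergenceThm D)
    (ε : ℝ) (hε : 0 < ε) (i : ℕ)
    (Gthr θα θω : ℝ) (hGthr : 0 < Gthr) (hαω : θα < θω)
    (CF : ℝ) (hCF : IsFriedrichs D CF)
    (A : ℝ → E2 → ℝ) (C : ℝ → E2 → E2)
    (UA : Set (ℝ × E2)) (hUAopen : IsOpen UA)
    (hUAsub : (univ : Set ℝ) ×ˢ closure D.Ω ⊆ UA)
    (hA : ContDiffOn ℝ 1 (fun p : ℝ × E2 => A p.1 p.2) UA)
    (hApos : ∀ θ x, 0 ≤ A θ x)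
    (hAwin : ∀ θ ∈ Icc θα θω, ∀ x, Gthr ≤ A θ x)
    (g : E2 → ℝ)
    (S₁ S₂ : ℝ → E2 → ℝ)
    (hreg1 : PeriodicReg D S₁) (hreg2 : PeriodicReg D S₂)
    (hpde1 : ∀ θ : ℝ, ∀ x ∈ D.Ω,
      deriv (fun s => S₁ s x) θ
          - (1 / ε ^ i) * vdiv (fun y => A θ y • gradient (S₁ θ) y) x
        = (1 / ε ^ i) * vdiv (C θ) x)
    (hpde2 : ∀ θ : ℝ, ∀ x ∈ D.Ω,
      deriv (fun s => S₂ s x) θ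
          - (1 / ε ^ i) * vdiv (fun y => A θ y • gradient (S₂ θ) y) x
        = (1 / ε ^ i) * vdiv (C θ) x)
    (hbc1 : ∀ θ : ℝ, ∀ x ∈ frontier D.Ω,
      ⟪gradient (S₁ θ) x, nml D x⟫ + S₁ θ x = g x)
    (hbc2 : ∀ θ : ℝ, ∀ x ∈ frontier D.Ω,
      ⟪gradient (S₂ θ) x, nml D x⟫ + S₂ θ x = g x) :
    ∀ θ : ℝ, ∀ x ∈ closure D.Ω, S₁ θ x = S₂ θ x := by
  have hAx : ∀ θ, ∀ x ∈ closure D.Ω, ContDiffAt ℝ 1 (A θ) x := fun θ x hx =>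
    contDiffAt_of_contDiffAt_uncurry
      (hA.contDiffAt (hUAopen.mem_nhds (hUAsub ⟨mem_univ θ, hx⟩)))
  have hA_pos : ∀ x ∈ closure D.Ω, 0 < A θα x := fun x _ =>
    hGthr.trans_le (hAwin θα ⟨le_rfl, hαω.le⟩ x)
  have hpde : ∀ θ, ∀ x ∈ D.Ω, deriv (fun s => S₁ s x - S₂ s x) θ =
      1 / ε ^ i * vdiv (fun y => A θ y • gradient (fun z => S₁ θ z - S₂ θ z) y) x := by
    intro θ x hx
    have hx' := subset_closure hx
    rw [deriv_fun_sub (hreg1.differentiableAt_fst θ hx') (hreg2.differentiableAt_fst θ hx'),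
      vdiv_smul_gradient_sub (hAx θ x hx') (hreg1.contDiffAt θ hx') (hreg2.contDiffAt θ hx')]
    linear_combination hpde1 θ x hx - hpde2 θ x hx
  have hbc : ∀ θ, ∀ x ∈ frontier D.Ω,
      ⟪gradient (fun z => S₁ θ z - S₂ θ z) x, nml D x⟫ + (S₁ θ x - S₂ θ x) = 0 := by
    intro θ x hx
    have hx' := frontier_subset_closure hx
    rw [gradient_sub ((hreg1.contDiffAt θ hx').differentiableAt two_ne_zero)
      ((hreg2.contDiffAt θ hx').differentiableAt two_ne_zero), inner_sub_left]
    linear_combination hbc1 θ x hx - hbc2 θ x hx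
  intro θ x hx
  exact sub_eq_zero.1 (eq_zero_of_periodic_robin hdiv hCF (by positivity) hAx
    (fun θ x _ => hApos θ x) hA_pos (hreg1.sub hreg2) hpde hbc θ x hx)

/-- uniqueness for the degenerate periodic Robin problem with a coercivity
window (Theorem 2.6). -/
theorem stmt10
    (D : C1Domain) (hdiv : DivergenceThm D)
    (ε : ℝ) (hε : 0 < ε) (i : ℕ) (hi : i = 0 ∨ i = 1)
    (Gthr θα θω : ℝ) (hGthr : 0 < Gthr) (hθα : 0 ≤ θα) (hαω : θα < θω) (hθω : θω ≤ 1)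
    (CF : ℝ) (hCF : IsFriedrichs D CF)
    (A : ℝ → E2 → ℝ) (C : ℝ → E2 → E2)
    (UA : Set (ℝ × E2)) (hUAopen : IsOpen UA)
    (hUAsub : (univ : Set ℝ) ×ˢ closure D.Ω ⊆ UA)
    (hA : ContDiffOn ℝ 1 (fun p : ℝ × E2 => A p.1 p.2) UA)
    (hC : ContDiffOn ℝ 1 (fun p : ℝ × E2 => C p.1 p.2) UA)
    (hAper : ∀ θ x, A (θ + 1) x = A θ x)
    (hCper : ∀ θ x, C (θ + 1) x = C θ x)
    (hApos : ∀ θ x, 0 ≤ A θ x)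
    (hAwin : ∀ θ ∈ Icc θα θω, ∀ x, Gthr ≤ A θ x)
    (g : E2 → ℝ) (hg : Continuous g)
    (S₁ S₂ : ℝ → E2 → ℝ)
    (hreg1 : PeriodicReg D S₁) (hreg2 : PeriodicReg D S₂)
    (hpde1 : ∀ θ : ℝ, ∀ x ∈ D.Ω,
      deriv (fun s => S₁ s x) θ
          - (1 / ε ^ i) * vdiv (fun y => A θ y • gradient (S₁ θ) y) x
        = (1 / ε ^ i) * vdiv (C θ) x)
    (hpde2 : ∀ θ : ℝ, ∀ x ∈ D.Ω,
      deriv (fun s => S₂ s x) θ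
          - (1 / ε ^ i) * vdiv (fun y => A θ y • gradient (S₂ θ) y) x
        = (1 / ε ^ i) * vdiv (C θ) x)
    (hbc1 : ∀ θ : ℝ, ∀ x ∈ frontier D.Ω,
      ⟪gradient (S₁ θ) x, nml D x⟫ + S₁ θ x = g x)
    (hbc2 : ∀ θ : ℝ, ∀ x ∈ frontier D.Ω,
      ⟪gradient (S₂ θ) x, nml D x⟫ + S₂ θ x = g x) :
    ∀ θ : ℝ, ∀ x ∈ closure D.Ω, S₁ θ x = S₂ θ x :=
  stmt10_general D hdiv ε hε i Gthr θα θω hGthr hαω CF hCF A C UA hUAopen hUAsub hA hApos hAwin g S₁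
    S₂ hreg1 hreg2 hpde1 hpde2 hbc1 hbc2

end
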